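/- Let F : L(K)^N → K be a social choice function and ρ^F = ⋀_{<∈L(K)^N} ◇_N(ballot(<) ∧ F(<)) the formula characterising it. Then F satisfies citizen sovereignty (for every x ∈ K there exists < ∈ L(K)^N with F(<) = x) if and only if the formula ρ^F → CITSOV is valid in all models of SCF over N and K, where CITSOV = ⋀_{x∈K} ◇_N x. -/
import Mathlib


open scoped Classical

/-- A linear order relation on `K`: `r x y` means "`x` is ranked at least as high as `y`".
It is reflexive, total-and-antisymmetric, and transitive. -/
def IsLin {K : Type} (r : K → K → Prop) : Prop :=
  (∀ x, r x x) ∧ (∀ x y, x ≠ y → (r x y ↔ ¬ r y x)) ∧ (∀ x y z, r x y → r y z → r x z)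

/-- The set `L(K)` of linear orders on `K`. -/
abbrev LinPref (K : Type) : Type := {r : K → K → Prop // IsLin r}

noncomputable instance (K : Type) [Finite K] : Fintype (LinPref K) :=
  Fintype.ofFinite _

noncomputable instance (N K : Type) [Finite N] [Finite K] : Fintype (N → LinPref K) :=
  Fintype.ofFinite _

inductive Formula (N K : Type) : Type
  | top : Formula N K
  | atom : N → K → K → Formula N K
  | outc : K → Formula N K
  | neg : Formula N K → Formula N K
  | or : Formula N K → Formula N K → Formula N K
  | diam : Finset N → Formula N K → Formula N K
  | pref : N → Formula N K → Formula N K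

namespace Formula
variable {N K : Type}

def and (φ ψ : Formula N K) : Formula N K := neg (or (neg φ) (neg ψ))
def imp (φ ψ : Formula N K) : Formula N K := or (neg φ) ψ
def iff (φ ψ : Formula N K) : Formula N K := and (imp φ ψ) (imp ψ φ)
def box (C : Finset N) (φ : Formula N K) : Formula N K := neg (diam C (neg φ))
def prefbox (i : N) (φ : Formula N K) : Formula N K := neg (pref i (neg φ))

def conj : List (Formula N K) → Formula N K
  | [] => top
  | φ :: l => and φ (conj l)

def disj : List (Formula N K) → Formula N K
  | [] => neg top
  | φ :: l => or φ (disj l)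

end Formula

/-- A model of social choice functions over `N` and `K`: an outcome for every state
(tuple of reported linear orders) together with a true preference for every agent. -/
structure SCFModel (N K : Type) where
  out : (N → LinPref K) → K
  tpref : N → LinPref K

/-- Truth of a formula at a state of a model of SCF. -/
def Sat {N K : Type} (M : SCFModel N K) : (N → LinPref K) → Formula N K → Prop
  | _, .top => True
  | v, .atom i x y => (v i).1 x y
  | v, .outc x => M.out v = x
  | v, .neg φ => ¬ Sat M v φ
  | v, .or φ ψ => Sat M v φ ∨ Sat M v ψ
  | v, .diam C φ => ∃ u, (∀ i ∉ C, u i = v i) ∧ Sat M u φ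
  | v, .pref i φ => ∃ u, (M.tpref i).1 (M.out u) (M.out v) ∧ Sat M u φ

/-- Validity in the class of all models of SCF over `N` and `K`. -/
def Valid (N K : Type) (φ : Formula N K) : Prop :=
  ∀ (M : SCFModel N K) (v : N → LinPref K), Sat M v φ

/-- The pairs `(x,y)` such that `y` comes immediately after `x` in the linear order `r`. -/
noncomputable def adjacentPairs {K : Type} [Fintype K] (r : LinPref K) : Finset (K × K) :=
  Finset.univ.filter (fun p : K × K =>
    r.1 p.1 p.2 ∧ p.1 ≠ p.2 ∧ ¬ ∃ z : K, z ≠ p.1 ∧ z ≠ p.2 ∧ r.1 p.1 z ∧ r.1 z p.2)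

/-- `ballot_i(<)`: the conjunction `p^i_{x1≥x2} ∧ … ∧ p^i_{x_{m-1}≥x_m}` along the
permutation `[x_1,…,x_m]` of `K` listing `r` from most to least preferred. -/
noncomputable def ballotAgent {N K : Type} [Fintype K] (i : N) (r : LinPref K) : Formula N K :=
  Formula.conj ((adjacentPairs r).toList.map fun p => Formula.atom i p.1 p.2)

/-- `ballot(<) = ⋀_{i∈N} ballot_i(<)`. -/
noncomputable def ballot {N K : Type} [Fintype N] [Fintype K] (pr : N → LinPref K) :
    Formula N K :=
  Formula.conj ((Finset.univ : Finset N).toList.map fun i => ballotAgent i (pr i))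

/-- `ρ^F = ⋀_{<∈L(K)^N} ◇_N (ballot(<) ∧ F(<))`. -/
noncomputable def rhoF {N K : Type} [Fintype N] [Fintype K]
    (F : (N → LinPref K) → K) : Formula N K :=
  Formula.conj ((Finset.univ : Finset (N → LinPref K)).toList.map fun pr =>
    Formula.diam Finset.univ (Formula.and (ballot pr) (Formula.outc (F pr))))
/-- `CITSOV = ⋀_{x∈K} ◇_N x`. -/
noncomputable def CITSOV (N K : Type) [Fintype N] [Fintype K] : Formula N K :=
  Formula.conj ((Finset.univ : Finset K).toList.map fun x =>
    Formula.diam Finset.univ (Formula.outc x))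

/-- `NODICT = ⋀_{i∈N} ◇_N ( ⋁_{x∈K} ( x ∧ ⋁_{y∈K∖{x}} p^i_{y≥x} ) )`. -/
noncomputable def NODICT (N K : Type) [Fintype N] [Fintype K] : Formula N K :=
  Formula.conj ((Finset.univ : Finset N).toList.map fun i =>
    Formula.diam Finset.univ (Formula.disj ((Finset.univ : Finset K).toList.map fun x =>
      Formula.and (Formula.outc x)
        (Formula.disj ((Finset.univ.erase x).toList.map fun y => Formula.atom i y x)))))

/-- `BR_i = ⋁_{x∈K} ( x ∧ □_i ⟨pref_i⟩ x )`. -/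
noncomputable def BR {N K : Type} [Fintype K] (i : N) : Formula N K :=
  Formula.disj ((Finset.univ : Finset K).toList.map fun x =>
    Formula.and (Formula.outc x) (Formula.box {i} (Formula.pref i (Formula.outc x))))

/-- `DOM = ⋀_{i∈N} □_{N∖{i}} BR_i`. -/
noncomputable def DOM (N K : Type) [Fintype N] [Fintype K] : Formula N K :=
  Formula.conj ((Finset.univ : Finset N).toList.map fun i =>
    Formula.box (Finset.univ.erase i) (BR i))

/-- `ψ ◁_i φ  =  □_N ⋁_{<∈L(K)^N} ( ballot(<) ∧ (φ → □_N (ψ → ⟨pref_i⟩ ballot(<))) )`. -/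
noncomputable def tri {N K : Type} [Fintype N] [Fintype K]
    (i : N) (ψ φ : Formula N K) : Formula N K :=
  Formula.box Finset.univ
    (Formula.disj ((Finset.univ : Finset (N → LinPref K)).toList.map fun pr =>
      Formula.and (ballot pr)
        (Formula.imp φ
          (Formula.box Finset.univ (Formula.imp ψ (Formula.pref i (ballot pr)))))))

/-- `trueprofile_i(<) = (x_m ◁_i x_{m-1}) ∧ … ∧ (x_2 ◁_i x_1)` for `<_i = [x_1,…,x_m]`. -/
noncomputable def trueprofileAgent {N K : Type} [Fintype N] [Fintype K]
    (i : N) (r : LinPref K) : Formula N K :=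
  Formula.conj ((adjacentPairs r).toList.map fun p =>
    tri i (Formula.outc p.2) (Formula.outc p.1))

/-- `trueprofile(<) = ⋀_{i∈N} trueprofile_i(<)`. -/
noncomputable def trueprofile {N K : Type} [Fintype N] [Fintype K]
    (pr : N → LinPref K) : Formula N K :=
  Formula.conj ((Finset.univ : Finset N).toList.map fun i => trueprofileAgent i (pr i))

/-- `STRPROOF = ⋀_{<∈L(K)^N} [ trueprofile(<) → (ballot(<) → DOM) ]`. -/
noncomputable def STRPROOF (N K : Type) [Fintype N] [Fintype K] : Formula N K :=
  Formula.conj ((Finset.univ : Finset (N → LinPref K)).toList.map fun pr =>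
    Formula.imp (trueprofile pr) (Formula.imp (ballot pr) (DOM N K)))

/-- `MON`, the modal formulation of monotonicity. -/
noncomputable def MON (N K : Type) [Fintype N] [Fintype K] : Formula N K :=
  Formula.conj
    ((Finset.univ : Finset ((N → LinPref K) × (N → LinPref K) × K)).toList.map fun t =>
      Formula.imp
        (Formula.and
          (Formula.diam Finset.univ (Formula.and (ballot t.1) (Formula.outc t.2.2)))
          (Formula.conj ((Finset.univ : Finset (N × K)).toList.map fun q =>
            Formula.imp
              (Formula.diam Finset.univ
                (Formula.and (ballot t.1) (Formula.atom q.1 t.2.2 q.2)))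
              (Formula.diam Finset.univ
                (Formula.and (ballot t.2.1) (Formula.atom q.1 t.2.2 q.2))))))
        (Formula.diam Finset.univ (Formula.and (ballot t.2.1) (Formula.outc t.2.2))))

section SCFProps

variable {N K : Type}

/-- Citizen sovereignty: every outcome is feasible. -/
def CitizenSovereignty (F : (N → LinPref K) → K) : Prop :=
  ∀ x : K, ∃ pr : N → LinPref K, F pr = x

/-- Non-dictatorship: for every player `i` there is a profile `<` such that
`F(<) <_i y` for some `y ≠ F(<)`. -/
def NonDictatorial (F : (N → LinPref K) → K) : Prop :=
  ∀ i : N, ∃ (pr : N → LinPref K) (y : K), y ≠ F pr ∧ (pr i).1 y (F pr)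

/-- Monotonicity of a social choice function. -/
def Monotonic (F : (N → LinPref K) → K) : Prop :=
  ∀ (pr pr' : N → LinPref K) (x : K), F pr = x →
    (∀ (i : N) (y : K), (pr i).1 x y → (pr' i).1 x y) → F pr' = x

/-- `a` is a dominant strategy equilibrium of the direct mechanism with outcome
function `o`, for true preferences `pref`. -/
def DomEquil (o : (N → LinPref K) → K) (pref : N → LinPref K)
    (a : N → LinPref K) : Prop :=
  ∀ (i : N) (u : N → LinPref K),
    (pref i).1 (o (Function.update u i (a i))) (o u)

/-- The direct mechanism `o` truthfully DOM-implements `F`. -/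
def TruthfullyDomImplements (o F : (N → LinPref K) → K) : Prop :=
  ∀ pr : N → LinPref K, DomEquil o pr pr ∧ o pr = F pr

/-- `F` is strategy-proof: its direct mechanism `g^F` truthfully DOM-implements `F`. -/
def StrategyProof (F : (N → LinPref K) → K) : Prop :=
  TruthfullyDomImplements F F

end SCFProps

lemma sat_conj {N K : Type} (M : SCFModel N K) (v : N → LinPref K) :
    ∀ l : List (Formula N K), Sat M v (Formula.conj l) ↔ ∀ φ ∈ l, Sat M v φ
  | [] => by simp [Formula.conj, Sat]
  | φ :: l => by
    simp only [Formula.conj, Formula.and, Sat, sat_conj M v l, not_or, not_not,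
      List.mem_cons]
    constructor
    · rintro ⟨h1, h2⟩ ψ (rfl | hψ)
      · exact h1
      · exact h2 ψ hψ
    · intro h
      exact ⟨h φ (Or.inl rfl), fun ψ hψ => h ψ (Or.inr hψ)⟩

/-- A default linear preference on a nonempty fintype. -/
noncomputable def defaultPref (K : Type) [Fintype K] : LinPref K :=
  ⟨fun a b => (Fintype.equivFin K) b ≤ (Fintype.equivFin K) a,
   fun a => le_refl _,
   fun a b hab =>
     ⟨fun h1 h2 => hab ((Fintype.equivFin K).injective (le_antisymm h2 h1)),
      fun h => le_of_not_ge h⟩,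
   fun a b c h1 h2 => le_trans h2 h1⟩

lemma sat_rhoF_self {N K : Type} [Fintype N] [Fintype K] (F : (N → LinPref K) → K)
    (tp : N → LinPref K) (v : N → LinPref K) :
    Sat ⟨F, tp⟩ v (rhoF F) := by
  rw [rhoF, sat_conj]
  intro φ hφ
  simp only [List.mem_map, Finset.mem_toList, Finset.mem_univ, true_and] at hφ
  obtain ⟨pr, -, rfl⟩ := hφ
  refine ⟨pr, fun i hi => absurd (Finset.mem_univ i) hi, ?_⟩
  show Sat _ _ (Formula.and _ _)
  have hb : Sat (⟨F, tp⟩ : SCFModel N K) pr (ballot pr) := by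
    rw [ballot, sat_conj]
    intro ψ hψ
    simp only [List.mem_map, Finset.mem_toList, Finset.mem_univ, true_and] at hψ
    obtain ⟨i, -, rfl⟩ := hψ
    rw [ballotAgent, sat_conj]
    intro χ hχ
    simp only [List.mem_map, Finset.mem_toList] at hχ
    obtain ⟨p, hp, rfl⟩ := hχ
    rw [adjacentPairs, Finset.mem_filter] at hp
    exact hp.2.1
  have : Sat (⟨F, tp⟩ : SCFModel N K) pr (Formula.outc (F pr)) := rfl
  simp only [Formula.and, Sat]
  tauto

/-- `F` satisfies citizen sovereignty iff `ρ^F → CITSOV` is valid in all models of SCF. -/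
theorem citizen_sovereignty_iff (N K : Type) [Fintype N] [Nonempty N] [Fintype K]
    (F : (N → LinPref K) → K) :
    CitizenSovereignty F ↔ Valid N K ((rhoF F).imp (CITSOV N K)) := by
  constructor
  · intro h M v
    show Sat M v (Formula.or (Formula.neg (rhoF F)) (CITSOV N K))
    by_cases hr : Sat M v (rhoF F)
    · refine Or.inr ?_
      rw [CITSOV, sat_conj]
      intro φ hφ
      simp only [List.mem_map, Finset.mem_toList, Finset.mem_univ, true_and] at hφ
      obtain ⟨x, -, rfl⟩ := hφ
      obtain ⟨pr, hpr⟩ := h x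
      rw [rhoF, sat_conj] at hr
      have h2 := hr (Formula.diam Finset.univ
          (Formula.and (ballot pr) (Formula.outc (F pr)))) (by
        simp only [List.mem_map, Finset.mem_toList, Finset.mem_univ, true_and]
        exact ⟨pr, rfl⟩)
      obtain ⟨u, hu1, hu2⟩ := h2
      refine ⟨u, hu1, ?_⟩
      simp only [Formula.and, Sat, not_or, not_not] at hu2
      show M.out u = x
      rw [hu2.2, hpr]
    · exact Or.inl hr
  · intro h x
    have r0 := defaultPref K
    set M : SCFModel N K := ⟨F, fun _ => r0⟩ with hM
    have hval := h M (fun _ => r0)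
    have hrho : Sat M (fun _ => r0) (rhoF F) := sat_rhoF_self F _ _
    rcases hval with h1 | h2
    · exact absurd hrho h1
    · rw [CITSOV, sat_conj] at h2
      have h3 := h2 (Formula.diam Finset.univ (Formula.outc x)) (by
        simp only [List.mem_map, Finset.mem_toList, Finset.mem_univ, true_and]
        exact ⟨x, rfl⟩)
      obtain ⟨u, -, hu⟩ := h3
      exact ⟨u, hu⟩
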